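/- arXiv:1409.2713 — 5 statements merged into one kernel-verified Lean document; each statement's English description precedes it below -/
import Mathlib

section
/- Let X₁, X₂, X₃ be binary random variables with strictly positive joint distribution P, parameterized log-linearly: log P(x₁,x₂,x₃) = Σ_{A ⊆ {1,2,3}} φ_A · ∏_{i∈A} xᵢ, where the indicator convention sets a term to zero unless all coordinates in A equal 1. Then the context-specific independence X₂ ⊥ X₃ | X₁ = 1 (i.e., P(X₂=a, X₃=b | X₁=1) = P(X₂=a | X₁=1)·P(X₃=b | X₁=1) for all a, b ∈ {0,1}) holds if and only if φ_{2,3} + φ_{1,2,3} = 0. -/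
/-- Indicator of a binary outcome. -/
def ind (b : Bool) : ℝ := if b then 1 else 0

theorem stmt_3 (P : Bool → Bool → Bool → ℝ)
    (hpos : ∀ a b c, 0 < P a b c)
    (hsum : ∑ a, ∑ b, ∑ c, P a b c = 1)
    (φ0 φ1 φ2 φ3 φ12 φ13 φ23 φ123 : ℝ)
    (hloglin : ∀ a b c, Real.log (P a b c) =
      φ0 + φ1 * ind a + φ2 * ind b + φ3 * ind c +
      φ12 * ind a * ind b + φ13 * ind a * ind c + φ23 * ind b * ind c +
      φ123 * ind a * ind b * ind c) :
    -- X₂ ⊥ X₃ | X₁ = 1  ↔  φ₂₃ + φ₁₂₃ = 0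
    (∀ a b : Bool,
      P true a b / (P true false false + P true false true +
        P true true false + P true true true) =
      ((P true a false + P true a true) / (P true false false + P true false true +
        P true true false + P true true true)) *
      ((P true false b + P true true b) / (P true false false + P true false true +
        P true true false + P true true true)))
    ↔ φ23 + φ123 = 0 := by
  have h00 := hpos true false false
  have h01 := hpos true false true
  have h10 := hpos true true false
  have h11 := hpos true true true
  have hS : (0:ℝ) < P true false false + P true false true +
      P true true false + P true true true := by linarith
  have hdet : (φ23 + φ123 = 0) ↔
      P true true true * P true false false = P true true false * P true false true := by
    have e11 := hloglin true true true
    have e00 := hloglin true false false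
    have e10 := hloglin true true false
    have e01 := hloglin true false true
    simp [ind] at e11 e00 e10 e01
    constructor
    · intro h
      have hlog : Real.log (P true true true * P true false false) =
          Real.log (P true true false * P true false true) := by
        rw [Real.log_mul (ne_of_gt h11) (ne_of_gt h00),
          Real.log_mul (ne_of_gt h10) (ne_of_gt h01)]
        linarith
      have := congrArg Real.exp hlog
      rwa [Real.exp_log (by positivity), Real.exp_log (by positivity)] at this
    · intro h
      have hlog : Real.log (P true true true * P true false false) =
          Real.log (P true true false * P true false true) := by rw [h]
      rw [Real.log_mul (ne_of_gt h11) (ne_of_gt h00),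
        Real.log_mul (ne_of_gt h10) (ne_of_gt h01)] at hlog
      linarith
  rw [hdet]
  constructor
  · intro h
    have := h true true
    field_simp at this
    nlinarith [this]
  · intro h a b
    field_simp
    cases a <;> cases b <;> nlinarith [h]
end

section
/- Let X₁, X₂, X₃ be binary random variables with strictly positive joint distribution P, parameterized log-linearly as log P(x₁,x₂,x₃) = Σ_{A ⊆ {1,2,3}} φ_A · ∏_{i∈A} xᵢ. Then the context-specific independence X₂ ⊥ X₃ | X₁ = 0 holds if and only if φ_{2,3} = 0. In particular, there exists a strictly positive P with φ_{2,3} = 0 but φ_{1,2,3} ≠ 0, so this model is non-hierarchical. -/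
/-- Log-linear parameterization of a distribution on {0,1}³. -/
def LogLinear (P : Bool → Bool → Bool → ℝ)
    (φ0 φ1 φ2 φ3 φ12 φ13 φ23 φ123 : ℝ) : Prop :=
  ∀ a b c, Real.log (P a b c) =
    φ0 + φ1 * ind a + φ2 * ind b + φ3 * ind c +
    φ12 * ind a * ind b + φ13 * ind a * ind c + φ23 * ind b * ind c +
    φ123 * ind a * ind b * ind c

/-- The context-specific independence X₂ ⊥ X₃ | X₁ = 0. -/
def CSI0 (P : Bool → Bool → Bool → ℝ) : Prop :=
  ∀ a b : Bool,
    P false a b / (P false false false + P false false true +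
      P false true false + P false true true) =
    ((P false a false + P false a true) / (P false false false + P false false true +
      P false true false + P false true true)) *
    ((P false false b + P false true b) / (P false false false + P false false true +
      P false true false + P false true true))

theorem stmt_4 (P : Bool → Bool → Bool → ℝ)
    (hpos : ∀ a b c, 0 < P a b c)
    (hsum : ∑ a, ∑ b, ∑ c, P a b c = 1)
    (φ0 φ1 φ2 φ3 φ12 φ13 φ23 φ123 : ℝ)
    (hloglin : LogLinear P φ0 φ1 φ2 φ3 φ12 φ13 φ23 φ123) :
    (CSI0 P ↔ φ23 = 0) ∧
    (∃ (Q : Bool → Bool → Bool → ℝ) (ψ0 ψ1 ψ2 ψ3 ψ12 ψ13 ψ23 ψ123 : ℝ),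
      (∀ a b c, 0 < Q a b c) ∧ (∑ a, ∑ b, ∑ c, Q a b c = 1) ∧
      LogLinear Q ψ0 ψ1 ψ2 ψ3 ψ12 ψ13 ψ23 ψ123 ∧
      ψ23 = 0 ∧ ψ123 ≠ 0) := by
  set p00 := P false false false with hp00
  set p01 := P false false true with hp01
  set p10 := P false true false with hp10
  set p11 := P false true true with hp11
  have h00 : 0 < p00 := hpos _ _ _
  have h01 : 0 < p01 := hpos _ _ _
  have h10 : 0 < p10 := hpos _ _ _
  have h11 : 0 < p11 := hpos _ _ _
  have hS : (0:ℝ) < p00 + p01 + p10 + p11 := by linarith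
  have hSne : p00 + p01 + p10 + p11 ≠ 0 := ne_of_gt hS
  have l00 : Real.log p00 = φ0 := by
    have := hloglin false false false; simpa [ind] using this
  have l01 : Real.log p01 = φ0 + φ3 := by
    have := hloglin false false true; simp [ind] at this; linarith
  have l10 : Real.log p10 = φ0 + φ2 := by
    have := hloglin false true false; simp [ind] at this; linarith
  have l11 : Real.log p11 = φ0 + φ2 + φ3 + φ23 := by
    have := hloglin false true true; simp [ind] at this; linarith
  -- cross-product equivalence
  have key : p00 * p11 = p01 * p10 ↔ φ23 = 0 := by
    constructor
    · intro h
      have : Real.log (p00 * p11) = Real.log (p01 * p10) := by rw [h]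
      rw [Real.log_mul (ne_of_gt h00) (ne_of_gt h11),
        Real.log_mul (ne_of_gt h01) (ne_of_gt h10), l00, l01, l10, l11] at this
      linarith
    · intro h
      have e1 : p00 * p11 = Real.exp (Real.log p00 + Real.log p11) := by
        rw [Real.exp_add, Real.exp_log h00, Real.exp_log h11]
      have e2 : p01 * p10 = Real.exp (Real.log p01 + Real.log p10) := by
        rw [Real.exp_add, Real.exp_log h01, Real.exp_log h10]
      rw [e1, e2, l00, l01, l10, l11, h]
      ring_nf
  constructor
  · constructor
    · intro hcsi
      have h := hcsi false false
      rw [div_mul_div_comm, div_eq_div_iff hSne (by positivity)] at h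
      have hcross : p00 * p11 = p01 * p10 := by nlinarith [h]
      exact key.mp hcross
    · intro h
      have hcross : p00 * p11 = p01 * p10 := key.mpr h
      intro a b
      rw [div_mul_div_comm, div_eq_div_iff hSne (by positivity)]
      cases a <;> cases b
      · linear_combination (p00+p01+p10+p11) * hcross
      · linear_combination (-(p00+p01+p10+p11)) * hcross
      · linear_combination (-(p00+p01+p10+p11)) * hcross
      · linear_combination (p00+p01+p10+p11) * hcross
  · -- existence: Q with ψ23 = 0, ψ123 = log 2 ≠ 0
    refine ⟨fun a b c => if a ∧ b ∧ c then 2/9 else 1/9,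
      Real.log (1/9), 0, 0, 0, 0, 0, 0, Real.log 2, ?_, ?_, ?_, rfl, ?_⟩
    · intro a b c; dsimp only; split <;> norm_num
    · simp [Fin.sum_univ_succ]; norm_num
    · intro a b c
      cases a <;> cases b <;> cases c <;>
        simp [ind, Real.log_div, Real.log_mul] <;> ring
    · simp only [ne_eq, Real.log_eq_zero]
      norm_num
end

section
/- Let P be a strictly positive distribution on {0,1}³ for variables (X₁, X₂, X₃). Suppose the graphical-model restrictions of the graph with edges {1,2} and {1,3} hold, i.e., X₂ ⊥ X₃ | X₁ (full conditional independence: P(X₂=a, X₃=b | X₁=c) = P(X₂=a | X₁=c)·P(X₃=b | X₁=c) for all a, b, c). Suppose additionally the context-specific independence X₁ ⊥ X₂ | X₃ = 1 holds. Then X₁ ⊥ X₂ (marginal independence) holds, i.e., the additional stratum restriction together with the graph implies φ_{1,2} = 0 in the log-linear parameterization. -/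
/-- Full conditional independence X₂ ⊥ X₃ | X₁ for a distribution on {0,1}³,
written P x₁ x₂ x₃. -/
def CI23g1 (P : Bool → Bool → Bool → ℝ) : Prop :=
  ∀ c a b : Bool,
    P c a b / (∑ a', ∑ b', P c a' b') =
    ((∑ b', P c a b') / (∑ a', ∑ b', P c a' b')) *
    ((∑ a', P c a' b) / (∑ a', ∑ b', P c a' b'))

/-- The context-specific independence X₁ ⊥ X₂ | X₃ = t. -/
def CSI12g3 (P : Bool → Bool → Bool → ℝ) (t : Bool) : Prop :=
  ∀ a b : Bool,
    P a b t / (∑ a', ∑ b', P a' b' t) =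
    ((∑ b', P a b' t) / (∑ a', ∑ b', P a' b' t)) *
    ((∑ a', P a' b t) / (∑ a', ∑ b', P a' b' t))

theorem stmt_12 (P : Bool → Bool → Bool → ℝ)
    (hpos : ∀ a b c, 0 < P a b c)
    (hsum : ∑ a, ∑ b, ∑ c, P a b c = 1)
    (hCI : CI23g1 P) (hCSI : CSI12g3 P true) :
    -- marginal independence X₁ ⊥ X₂
    ∀ a b : Bool,
      (∑ c, P a b c) = (∑ b', ∑ c, P a b' c) * (∑ a', ∑ c, P a' b c) := by
  intro a b
  have hSpos : ∀ x, 0 < ∑ y, ∑ z, P x y z := fun x =>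
    Finset.sum_pos (fun y _ => Finset.sum_pos (fun z _ => hpos x y z) (by simp)) (by simp)
  have hTpos : 0 < ∑ u, ∑ v, P u v true :=
    Finset.sum_pos (fun u _ => Finset.sum_pos (fun v _ => hpos u v true) (by simp)) (by simp)
  have hQpos : ∀ x, 0 < ∑ y, P x y true := fun x =>
    Finset.sum_pos (fun y _ => hpos x y true) (by simp)
  -- Step 1: clear denominators in hCI and hCSI for the relevant instances
  have h1 : ∀ x, P x b true * (∑ y, ∑ z, P x y z)
      = (∑ z, P x b z) * (∑ y, P x y true) := by
    intro x
    have hA := hCI x b true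
    rw [div_mul_div_comm, div_eq_div_iff (hSpos x).ne' (mul_ne_zero (hSpos x).ne' (hSpos x).ne')] at hA
    apply mul_right_cancel₀ (hSpos x).ne'
    linear_combination hA
  have h2 : ∀ x, P x b true * (∑ u, ∑ v, P u v true)
      = (∑ y, P x y true) * (∑ u, P u b true) := by
    intro x
    have hB := hCSI x b
    rw [div_mul_div_comm, div_eq_div_iff hTpos.ne' (mul_ne_zero hTpos.ne' hTpos.ne')] at hB
    apply mul_right_cancel₀ hTpos.ne'
    linear_combination hB
  -- Step 2: combine to get R x b * T = V b * S x
  have hstar : ∀ x, (∑ z, P x b z) * (∑ u, ∑ v, P u v true)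
      = (∑ u, P u b true) * (∑ y, ∑ z, P x y z) := by
    intro x
    apply mul_right_cancel₀ (hQpos x).ne'
    linear_combination (∑ y, ∑ z, P x y z) * h2 x - (∑ u, ∑ v, P u v true) * h1 x
  -- Step 3: sum over x to identify V b
  have hM : (∑ u, ∑ z, P u b z) * (∑ u, ∑ v, P u v true) = (∑ u, P u b true) := by
    calc (∑ u, ∑ z, P u b z) * (∑ u, ∑ v, P u v true)
        = ∑ u, (∑ z, P u b z) * (∑ u, ∑ v, P u v true) := by rw [Finset.sum_mul]
      _ = ∑ u, (∑ u, P u b true) * (∑ y, ∑ z, P u y z) :=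
          Finset.sum_congr rfl (fun x _ => hstar x)
      _ = (∑ u, P u b true) * ∑ u, ∑ y, ∑ z, P u y z := by rw [Finset.mul_sum]
      _ = (∑ u, P u b true) := by rw [hsum, mul_one]
  -- Step 4: conclude
  apply mul_right_cancel₀ hTpos.ne'
  linear_combination hstar a - (∑ y, ∑ z, P a y z) * hM
end

section
/- Let P be a strictly positive distribution on {0,1}³ satisfying X₂ ⊥ X₃ | X₁ (conditional independence given X₁). Then the two context-specific independence statements 'X₁ ⊥ X₂ | X₃ = 0' and 'X₁ ⊥ X₂ | X₃ = 1' are equivalent: either one implies the other. -/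
lemma det_iff (p : Bool → Bool → ℝ) (hp : ∀ a b, 0 < p a b) :
    (∀ a b : Bool,
      p a b / (∑ a', ∑ b', p a' b') =
      ((∑ b', p a b') / (∑ a', ∑ b', p a' b')) *
      ((∑ a', p a' b) / (∑ a', ∑ b', p a' b'))) ↔
    p false false * p true true = p false true * p true false := by
  have hS : (0:ℝ) < p true true + p true false + (p false true + p false false) := by
    have := hp false false; have := hp false true; have := hp true false; have := hp true true
    linarith
  constructor
  · intro h
    have h0 := h false false
    simp only [Fintype.sum_bool] at h0
    rw [div_mul_div_comm, div_eq_div_iff hS.ne' (mul_pos hS hS).ne'] at h0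
    exact mul_left_cancel₀ hS.ne' (by linear_combination h0)
  · intro hdet a b
    simp only [Fintype.sum_bool]
    rw [div_mul_div_comm, div_eq_div_iff hS.ne' (mul_pos hS hS).ne']
    cases a <;> cases b <;>
      first
        | linear_combination (p true true + p true false + (p false true + p false false)) * hdet
        | linear_combination (-(p true true + p true false + (p false true + p false false))) * hdet

theorem stmt_13 (P : Bool → Bool → Bool → ℝ)
    (hpos : ∀ a b c, 0 < P a b c)
    (hsum : ∑ a, ∑ b, ∑ c, P a b c = 1)
    (hCI : CI23g1 P) :
    CSI12g3 P false ↔ CSI12g3 P true := by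
  have hf := (det_iff (P false) (fun a b => hpos false a b)).mp (fun a b => hCI false a b)
  have ht := (det_iff (P true) (fun a b => hpos true a b)).mp (fun a b => hCI true a b)
  have e0 : CSI12g3 P false ↔
      P false false false * P true true false = P false true false * P true false false :=
    det_iff (fun a b => P a b false) (fun a b => hpos a b false)
  have e1 : CSI12g3 P true ↔
      P false false true * P true true true = P false true true * P true false true :=
    det_iff (fun a b => P a b true) (fun a b => hpos a b true)
  rw [e0, e1]
  constructor
  · intro h0
    have key : (P false false true * P true true true) * (P false true false * P true false false)
        = (P false true true * P true false true) * (P false true false * P true false false) := by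
      linear_combination (-(P true true true * P true false false)) * hf
        + (P false false false * P false true true) * ht
        + (P false true true * P true false true) * h0
    exact mul_right_cancel₀ (mul_pos (hpos false true false) (hpos true false false)).ne' key
  · intro h1
    have key : (P false false false * P true true false) * (P false true true * P true false true)
        = (P false true false * P true false false) * (P false true true * P true false true) := by
      linear_combination (P true true false * P true false true) * hf
        + (-(P false false true * P false true false)) * ht
        + (P false true false * P true false false) * h1
    exact mul_right_cancel₀ (mul_pos (hpos false true true) (hpos true false true)).ne' key
end

section
/- Let P be a strictly positive distribution on {0,1}ⁿ with log-linear parameters (φ_A). For distinct indices δ, γ and any other index ζ, if every parameter φ_A with {δ, γ, ζ} ⊆ A is zero, then the restriction Σ_{a ∈ D({δ,γ}; L∪{ζ})} φ_a = 0 is equivalent to the restriction Σ_{a ∈ D({δ,γ}; L)} φ_a = 0, for any set L ⊆ Δ∖{δ,γ,ζ}, where D(A;B) = { A ∪ C : C ⊆ B }. -/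
theorem stmt_18 (n : ℕ) (P : (Fin n → Bool) → ℝ)
    (hpos : ∀ x, 0 < P x) (hsum : ∑ x, P x = 1)
    (φ : Finset (Fin n) → ℝ)
    (hloglin : ∀ x : Fin n → Bool,
      Real.log (P x) = ∑ A : Finset (Fin n), φ A * ∏ i ∈ A, (if x i then (1 : ℝ) else 0))
    (δ γ ζ : Fin n) (hδγ : δ ≠ γ) (hδζ : δ ≠ ζ) (hγζ : γ ≠ ζ)
    (hzero : ∀ A : Finset (Fin n), {δ, γ, ζ} ⊆ A → φ A = 0)
    (L : Finset (Fin n)) (hδL : δ ∉ L) (hγL : γ ∉ L) (hζL : ζ ∉ L) :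
    ((∑ C ∈ (insert ζ L).powerset, φ ({δ, γ} ∪ C)) = 0) ↔
    ((∑ C ∈ L.powerset, φ ({δ, γ} ∪ C)) = 0) := by
  have h : (∑ C ∈ (insert ζ L).powerset, φ ({δ, γ} ∪ C)) =
      (∑ C ∈ L.powerset, φ ({δ, γ} ∪ C)) := by
    rw [Finset.sum_powerset_insert hζL]
    have : (∑ C ∈ L.powerset, φ ({δ, γ} ∪ insert ζ C)) = 0 := by
      apply Finset.sum_eq_zero
      intro C hC
      apply hzero
      intro x hx
      simp only [Finset.mem_insert, Finset.mem_singleton] at hx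
      rcases hx with h | h | h <;> subst h <;> simp [Finset.mem_union]
    rw [this, add_zero]
  rw [h]
end
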